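/- In any pLTS, if a relation R on the set of states is consistent, then R is contained in bisimilarity: R ⊆ ∼. -/

import Mathlib

open scoped ENNReal

noncomputable section

/-- A probabilistic labelled transition system (pLTS): states `S`, alphabet `A`,
and a transition relation into probability distributions (`PMF`s) on `S`. -/
structure PLTS (S : Type) (A : Type) where
  Tr : S → A → PMF S → Prop

namespace PLTS

variable {S A : Type}

/-- The mass that a distribution assigns to a set of states. -/
def mass (d : PMF S) (E : Set S) : ℝ≥0∞ := ∑' s : E, d s

/-- Two distributions are `r`-equivalent if they assign equal mass to every
`r`-equivalence class (for an equivalence `r`, the classes are the sets `{t | r s t}`). -/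
def REquiv (r : S → S → Prop) (d d' : PMF S) : Prop :=
  ∀ s : S, mass d {t | r s t} = mass d' {t | r s t}

/-- An equivalence relation is a bisimulation if related states can match
each other's transitions with `r`-equivalent target distributions. -/
def IsBisimulation (L : PLTS S A) (r : S → S → Prop) : Prop :=
  Equivalence r ∧
    ∀ s t, r s t → ∀ a d, L.Tr s a d → ∃ d', L.Tr t a d' ∧ REquiv r d d'

/-- Bisimilarity: the union of all bisimulation relations. -/
def Bisim (L : PLTS S A) (s t : S) : Prop :=
  ∃ r, L.IsBisimulation r ∧ r s t

/-- The bisimulation approximants `∼ₙ`. -/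
def approx (L : PLTS S A) : ℕ → S → S → Prop
  | 0 => fun _ _ => True
  | n + 1 => fun s t =>
      (∀ a d, L.Tr s a d → ∃ d', L.Tr t a d' ∧ REquiv (L.approx n) d d') ∧
      (∀ a d', L.Tr t a d' → ∃ d, L.Tr s a d ∧ REquiv (L.approx n) d d')

/-- A pLTS is finitely branching if every state has finitely many transitions. -/
def FinBranching (L : PLTS S A) : Prop :=
  ∀ s, {p : A × PMF S | L.Tr s p.1 p.2}.Finite

/-- One-step successor relation: `s → s'` iff some transition of `s` gives `s'`
positive probability. -/
def Step (L : PLTS S A) (s s' : S) : Prop :=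
  ∃ a d, L.Tr s a d ∧ d s' ≠ 0

end PLTS

namespace PLTS

variable {S A : Type}

/-- The pair `(s, t)` is consistent with respect to a relation `R`:
each transition of `s` is matched by one of `t` (and vice versa) with target
distributions equivalent w.r.t. the least equivalence relation containing
`{(s', t') | s → s', t → t', R s' t'}`. -/
def ConsistentPair (L : PLTS S A) (R : S → S → Prop) (s t : S) : Prop :=
  (∀ a d, L.Tr s a d → ∃ d', L.Tr t a d' ∧
      REquiv (Relation.EqvGen fun x y => L.Step s x ∧ L.Step t y ∧ R x y) d d') ∧
  (∀ a d', L.Tr t a d' → ∃ d, L.Tr s a d ∧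
      REquiv (Relation.EqvGen fun x y => L.Step s x ∧ L.Step t y ∧ R x y) d d')

/-- A relation `R` is consistent if every pair in `R` is consistent w.r.t. `R`. -/
def Consistent (L : PLTS S A) (R : S → S → Prop) : Prop :=
  ∀ s t, R s t → L.ConsistentPair R s t

end PLTS

/-!
The equivalence closure `≈` of a consistent relation `R` is a bisimulation. The matching
relation "every transition of `s` is matched by a transition of `t` with `≈`-equivalent
target, and vice versa" is an equivalence relation; it contains `R` because the local
equivalence in the definition of consistency is finer than `≈`, and equivalence of
distributions is preserved under coarsening the equivalence (both amount to equality of the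
push-forwards to the quotient). Hence it contains `≈`.
-/

namespace PLTS

variable {S A : Type}

theorem mass_eq_toOuterMeasure (d : PMF S) (E : Set S) : mass d E = d.toOuterMeasure E := by
  rw [mass, PMF.toOuterMeasure_apply, tsum_subtype]

theorem mass_setOf_rel_eq_map_apply (r : Setoid S) (d : PMF S) (s : S) :
    mass d {t | r s t} = d.map (Quotient.mk r) ⟦s⟧ := by
  rw [mass_eq_toOuterMeasure, ← PMF.toOuterMeasure_apply_singleton, PMF.toOuterMeasure_map_apply]
  congr 1
  ext t
  simp only [Set.mem_ofPred_eq, Set.mem_preimage, Set.mem_singleton_iff, Quotient.eq]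
  exact ⟨r.symm, r.symm⟩

theorem rEquiv_iff_map_eq (r : Setoid S) {d d' : PMF S} :
    REquiv r d d' ↔ d.map (Quotient.mk r) = d'.map (Quotient.mk r) := by
  simp only [REquiv, mass_setOf_rel_eq_map_apply]
  exact ⟨fun h => PMF.ext (Quotient.ind h), fun h s => by rw [h]⟩

theorem REquiv.mono {r r' : Setoid S} (hle : r ≤ r') {d d' : PMF S} (h : REquiv r d d') :
    REquiv r' d d' := by
  have hfactor : Quotient.mk r' = Quotient.map' id hle ∘ Quotient.mk r := rfl
  rw [rEquiv_iff_map_eq] at h ⊢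
  rw [hfactor, ← PMF.map_comp, ← PMF.map_comp, h]

theorem rEquiv_equivalence (r : S → S → Prop) : Equivalence (REquiv r) :=
  ⟨fun _ _ => rfl, fun h s => (h s).symm, fun h h' s => (h s).trans (h' s)⟩

def Matches (L : PLTS S A) (r : S → S → Prop) (s t : S) : Prop :=
  (∀ a d, L.Tr s a d → ∃ d', L.Tr t a d' ∧ REquiv r d d') ∧
  (∀ a d', L.Tr t a d' → ∃ d, L.Tr s a d ∧ REquiv r d d')

theorem matches_equivalence (L : PLTS S A) (r : S → S → Prop) : Equivalence (L.Matches r) := by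
  have hr := rEquiv_equivalence r
  refine ⟨fun s => ⟨fun a d hd => ⟨d, hd, hr.refl d⟩, fun a d hd => ⟨d, hd, hr.refl d⟩⟩,
    fun ⟨hst, hts⟩ => ⟨fun a d hd => ?_, fun a d hd => ?_⟩, fun ⟨hst, hts⟩ ⟨htu, hut⟩ => ⟨?_, ?_⟩⟩
  · obtain ⟨d', hd', he⟩ := hts a d hd
    exact ⟨d', hd', hr.symm he⟩
  · obtain ⟨d', hd', he⟩ := hst a d hd
    exact ⟨d', hd', hr.symm he⟩
  · intro a d hd
    obtain ⟨d', hd', he⟩ := hst a d hd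
    obtain ⟨d'', hd'', he'⟩ := htu a d' hd'
    exact ⟨d'', hd'', hr.trans he he'⟩
  · intro a d hd
    obtain ⟨d', hd', he⟩ := hut a d hd
    obtain ⟨d'', hd'', he'⟩ := hts a d' hd'
    exact ⟨d'', hd'', hr.trans he' he⟩

theorem Matches.mono {L : PLTS S A} {r r' : Setoid S} (hle : r ≤ r') {s t : S}
    (h : L.Matches r s t) : L.Matches r' s t := by
  obtain ⟨hst, hts⟩ := h
  refine ⟨fun a d hd => ?_, fun a d hd => ?_⟩
  · obtain ⟨d', hd', he⟩ := hst a d hd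
    exact ⟨d', hd', he.mono hle⟩
  · obtain ⟨d', hd', he⟩ := hts a d hd
    exact ⟨d', hd', he.mono hle⟩

-- `ConsistentPair R s t` is by definition `Matches` for the local equivalence of `(s, t)`.
theorem ConsistentPair.matches_eqvGen {L : PLTS S A} {R : S → S → Prop} {s t : S}
    (h : L.ConsistentPair R s t) : L.Matches (Relation.EqvGen R) s t :=
  Matches.mono (r := Relation.EqvGen.setoid _) (r' := Relation.EqvGen.setoid R)
    (Relation.EqvGen.mono fun _ _ hxy => hxy.2.2) h

theorem Consistent.eqvGen_le_matches {L : PLTS S A} {R : S → S → Prop} (hR : L.Consistent R) :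
    Relation.EqvGen R ≤ L.Matches (Relation.EqvGen R) := fun s t hst =>
  (matches_equivalence L _).eqvGen_iff.mp <|
    Relation.EqvGen.mono (fun x y hxy => (hR x y hxy).matches_eqvGen) s t hst

theorem Consistent.isBisimulation_eqvGen {L : PLTS S A} {R : S → S → Prop}
    (hR : L.Consistent R) : L.IsBisimulation (Relation.EqvGen R) :=
  ⟨Relation.EqvGen.is_equivalence R, fun s t hst => (hR.eqvGen_le_matches s t hst).1⟩

end PLTS

theorem consistent_subset_bisim_general (S A : Type) (L : PLTS S A)
    (R : S → S → Prop) (hR : L.Consistent R) :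
    ∀ s t, R s t → L.Bisim s t :=
  fun s t hst => ⟨Relation.EqvGen R, hR.isBisimulation_eqvGen, Relation.EqvGen.rel s t hst⟩

/-- In any pLTS, every consistent relation is contained in
bisimilarity. -/
theorem consistent_subset_bisim (S A : Type) [Countable S] (L : PLTS S A)
    (R : S → S → Prop) (hR : L.Consistent R) :
    ∀ s t, R s t → L.Bisim s t :=
  consistent_subset_bisim_general S A L R hR
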